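/- Every mixed Hodge structure (V, W, F) admits a Deligne splitting: a direct sum decomposition V_ℂ = ⊕_{p,q} I^{p,q}(V) such that W_m V_ℂ = ⊕_{p+q ≤ m} I^{p,q}(V) and F^k V_ℂ = ⊕_{p ≥ k} I^{p,q}(V), and this splitting is functorial: any morphism of mixed Hodge structures sends I^{p,q}(V) into I^{p,q}(V'). -/

import Mathlib

open LinearMap Submodule TensorProduct

variable (K : Type) [Field K] [Algebra K ℝ] [Algebra K ℂ] [IsScalarTower K ℝ ℂ]

/-- Complex conjugation on `ℂ`, as a `K`-linear map for a subfield `K ⊆ ℝ`. -/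
def conjK : ℂ →ₗ[K] ℂ where
  toFun := star
  map_add' := star_add
  map_smul' s c := by
    simp only [RingHom.id_apply]
    rw [Algebra.smul_def, Algebra.smul_def, star_mul']
    congr 1
    rw [IsScalarTower.algebraMap_apply K ℝ ℂ]
    exact Complex.conj_ofReal _

variable {V : Type} [AddCommGroup V] [Module K V]

/-- Conjugation on the complexification `ℂ ⊗[K] V`. -/
noncomputable def conjT : ℂ ⊗[K] V →ₗ[K] ℂ ⊗[K] V :=
  TensorProduct.map (conjK K) LinearMap.id

lemma conjT_smul (c : ℂ) (x : ℂ ⊗[K] V) :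
    conjT K (c • x) = (starRingEnd ℂ c) • conjT K x := by
  induction x using TensorProduct.induction_on with
  | zero => simp
  | tmul c' v =>
      rw [TensorProduct.smul_tmul']
      simp [conjT, conjK, TensorProduct.smul_tmul']
  | add x y hx hy => simp [smul_add, map_add, hx, hy]

/-- The conjugate of a `ℂ`-submodule of the complexification. -/
noncomputable def conjSub (S : Submodule ℂ (ℂ ⊗[K] V)) : Submodule ℂ (ℂ ⊗[K] V) where
  carrier := conjT K '' S
  add_mem' := by
    rintro _ _ ⟨x, hx, rfl⟩ ⟨y, hy, rfl⟩
    exact ⟨x + y, S.add_mem hx hy, map_add _ _ _⟩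
  zero_mem' := ⟨0, S.zero_mem, map_zero _⟩
  smul_mem' c := by
    rintro _ ⟨x, hx, rfl⟩
    refine ⟨(starRingEnd ℂ c) • x, S.smul_mem _ hx, ?_⟩
    rw [conjT_smul]
    simp

/-- The data of a pre-mixed Hodge structure: an increasing, exhaustive, bounded below
weight filtration `W` on `V` and a decreasing, exhaustive, bounded filtration `F`
(the Hodge filtration) on `V_ℂ = ℂ ⊗ V`. -/
structure PreMHS (V : Type) [AddCommGroup V] [Module K V] where
  W : ℤ → Submodule K V
  Wmono : ∀ m, W m ≤ W (m + 1)
  Wexh : ∀ v : V, ∃ m, v ∈ W m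
  Wbdd : ∃ m, W m = ⊥
  F : ℤ → Submodule ℂ (ℂ ⊗[K] V)
  Fanti : ∀ p, F (p + 1) ≤ F p
  Fexh : ∃ p, F p = ⊤
  Fbdd : ∃ p, F p = ⊥

namespace PreMHS

variable {K} (H : PreMHS K V)

/-- The weight filtration on the complexification. -/
noncomputable def WC (m : ℤ) : Submodule ℂ (ℂ ⊗[K] V) := (H.W m).baseChange ℂ

/-- The weight graded pieces of the complexification. -/
noncomputable abbrev GrW (m : ℤ) : Type :=
  H.WC m ⧸ (H.WC (m - 1)).comap (H.WC m).subtype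

/-- The filtration induced by `F` on the weight graded pieces. -/
noncomputable def FGr (m p : ℤ) : Submodule ℂ (H.GrW m) :=
  Submodule.map (Submodule.mkQ _) ((H.F p).comap (H.WC m).subtype)

/-- The filtration induced by the conjugate of `F` on the weight graded pieces. -/
noncomputable def cFGr (m q : ℤ) : Submodule ℂ (H.GrW m) :=
  Submodule.map (Submodule.mkQ _) ((conjSub K (H.F q)).comap (H.WC m).subtype)

/-- `(W, F)` is a mixed Hodge structure if `F` and its conjugate induce `m`-opposed
filtrations on each weight graded piece `Gr^W_m`, i.e. `Gr^W_m = F^p ⊕ conj(F^{m-p+1})`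
for all `p` (so each `Gr^W_m` is a pure Hodge structure of weight `m`). -/
def IsMHS : Prop := ∀ m p : ℤ, IsCompl (H.FGr m p) (H.cFGr m (m - p + 1))

end PreMHS

/-- A morphism of (pre-)mixed Hodge structures. -/
structure IsMHSHom {V V' : Type} [AddCommGroup V] [Module K V] [AddCommGroup V']
    [Module K V'] (H : PreMHS K V) (H' : PreMHS K V') (f : V →ₗ[K] V') : Prop where
  mapW : ∀ m, (H.W m).map f ≤ H'.W m
  mapF : ∀ p, (H.F p).map (f.baseChange ℂ) ≤ H'.F p
/-- Deligne's canonical splitting: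
`I^{p,q} = F^p ∩ W_{p+q} ∩ (conj(F^q) ∩ W_{p+q} + Σ_{j≥2} conj(F^{q-j+1}) ∩ W_{p+q-j})`. -/
noncomputable def deligneI {V : Type} [AddCommGroup V] [Module K V]
    (H : PreMHS K V) (p q : ℤ) : Submodule ℂ (ℂ ⊗[K] V) :=
  H.F p ⊓ H.WC (p + q) ⊓
    ((conjSub K (H.F q) ⊓ H.WC (p + q)) ⊔
      ⨆ j : {j : ℤ // 2 ≤ j}, (conjSub K (H.F (q - j.1 + 1)) ⊓ H.WC (p + q - j.1)))

/-!
All the work happens in the modular lattice of `ℂ`-subspaces of `V_ℂ`. Let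
`Ĝ_m S = S ∩ W_m + W_{m-1}` be the preimage in `W_m` of the image of `S` in `Gr^W_m`; the mixed
Hodge condition says that `Ĝ_m F^p` and `Ĝ_m (conj F^q)` are complements of each other between
`W_{m-1}` and `W_m` whenever `p + q = m + 1`. For `p + q = m`, the tail terms
`conj F^{q-j+1} ∩ W_{m-j}` of Deligne's formula are exactly what is needed to correct a lift of a
class of `F^p ∩ conj F^q ⊆ Gr^W_m` successively modulo `W_{m-1}, W_{m-2}, …` into `I^{p,q}`, while
opposedness on `Gr^W_{m-j}` shows that `I^{p,q} ∩ W_{m-1} = 0`. Hence `I^{p,q}` maps isomorphically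
onto the Hodge piece `H^{p,q}` of `Gr^W_m`, and the Hodge decomposition of each `Gr^W_m` gives, by
induction on the weight, both the spanning and the independence statements. Functoriality holds
because the formula for `I^{p,q}` only uses sums and intersections of the filtrations and their
conjugates.
-/

theorem Int.induction_of_forall_le {P : ℤ → Prop} (n₀ : ℤ) (base : ∀ n ≤ n₀, P n)
    (succ : ∀ n, P n → P (n + 1)) (n : ℤ) : P n :=
  Int.inductionOn' n n₀ (base n₀ le_rfl) (fun k _ => succ k) fun k hk _ => base (k - 1) (by omega)

theorem Int.induction_of_forall_ge {P : ℤ → Prop} (n₀ : ℤ) (base : ∀ n, n₀ ≤ n → P n)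
    (pred : ∀ n, P (n + 1) → P n) (n : ℤ) : P n :=
  Int.inductionOn' n n₀ (base n₀ le_rfl) (fun k hk _ => base (k + 1) (by omega))
    fun k _ ih => pred (k - 1) (by rwa [sub_add_cancel])

theorem iSupIndep_of_disjoint_sup_lower {ι R M : Type*} [Ring R] [AddCommGroup M] [Module R M]
    {W : ℤ → Submodule R M} (hW : Monotone W) {I : ι → Submodule R M} (ℓ : ι → ℤ)
    (hI : ∀ i, I i ≤ W (ℓ i))
    (hdisj : ∀ i, Disjoint (I i) (W (ℓ i - 1) ⊔ ⨆ (j) (_ : ℓ j = ℓ i) (_ : j ≠ i), I j)) :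
    iSupIndep I := by
  classical
  rw [iSupIndep_iff_finsetSum_eq_zero_imp_eq_zero]
  intro s
  induction s using Finset.induction_on_max_value ℓ with
  | empty => simp
  | insert a s has hmax ih =>
    intro y hy hsum
    rw [Finset.sum_insert has] at hsum
    have hya : y a = 0 := by
      refine Submodule.disjoint_def.1 (hdisj a) _ (hy a (s.mem_insert_self a)) ?_
      rw [eq_neg_of_add_eq_zero_left hsum]
      refine Submodule.neg_mem _ (Submodule.sum_mem _ fun j hj => ?_)
      have hyj := hy j (Finset.mem_insert_of_mem hj)
      rcases (hmax j hj).eq_or_lt with hja | hja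
      · refine Submodule.mem_sup_right ?_
        exact Submodule.mem_iSup_of_mem j <| Submodule.mem_iSup_of_mem hja <|
          Submodule.mem_iSup_of_mem (ne_of_mem_of_not_mem hj has) hyj
      · exact Submodule.mem_sup_left (hW (by omega) (hI j hyj))
    rw [hya, zero_add] at hsum
    intro i hi
    rcases Finset.mem_insert.1 hi with rfl | hi
    · exact hya
    · exact ih y (fun j hj => hy j (Finset.mem_insert_of_mem hj)) hsum i hi

theorem inf_inf_sup_le_of_inf_le {α : Type*} [Lattice α] [IsModularLattice α] {a b a' b' c : α}
    (ha : a' ≤ a) (hc : c ≤ a') (hab' : a ⊓ b' ≤ c) (ha'b : a' ⊓ b ≤ c) :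
    a ⊓ b ⊓ (a' ⊔ b') ≤ c := by
  have h : (a' ⊔ b') ⊓ a ≤ a' := by
    rw [sup_inf_assoc_of_le _ ha, inf_comm]
    exact sup_le le_rfl (hab'.trans hc)
  exact (le_inf ((le_inf inf_le_right (inf_le_left.trans inf_le_left)).trans h)
    (inf_le_left.trans inf_le_right)).trans ha'b

namespace Submodule

variable {R M : Type*} [Ring R] [AddCommGroup M] [Module R M] {P Q : Submodule R M}

theorem map_subtype_comap_mkQ_map_mkQ (hPQ : P ≤ Q) (S : Submodule R M) :
    (((S.comap Q.subtype).map (P.comap Q.subtype).mkQ).comap (P.comap Q.subtype).mkQ).map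
      Q.subtype = S ⊓ Q ⊔ P := by
  rw [comap_map_mkQ, map_sup, map_comap_subtype, map_comap_subtype, inf_eq_right.2 hPQ,
    inf_comm, sup_comm]

theorem sup_eq_and_inf_eq_of_isCompl_map_mkQ (hPQ : P ≤ Q) {S T : Submodule R M}
    (h : IsCompl ((S.comap Q.subtype).map (P.comap Q.subtype).mkQ)
      ((T.comap Q.subtype).map (P.comap Q.subtype).mkQ)) :
    (S ⊓ Q ⊔ P) ⊔ (T ⊓ Q ⊔ P) = Q ∧ (S ⊓ Q ⊔ P) ⊓ (T ⊓ Q ⊔ P) = P := by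
  rw [← map_subtype_comap_mkQ_map_mkQ hPQ, ← map_subtype_comap_mkQ_map_mkQ hPQ]
  constructor
  · rw [← map_sup, comap_map_mkQ, comap_map_mkQ, ← sup_sup_distrib_left, ← comap_map_mkQ, map_sup,
      h.sup_eq_top, comap_top, map_subtype_top]
  · rw [← map_inf _ Q.injective_subtype, ← comap_inf, h.inf_eq_bot, comap_bot, ker_mkQ,
      map_comap_subtype, inf_eq_right.2 hPQ]

end Submodule

theorem Submodule.map_baseChange_le {R A M N : Type*} [CommSemiring R] [Semiring A] [Algebra R A]
    [AddCommMonoid M] [Module R M] [AddCommMonoid N] [Module R N] (f : M →ₗ[R] N)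
    (S : Submodule R M) : (S.baseChange A).map (f.baseChange A) ≤ (S.map f).baseChange A := by
  have hf : f ∘ₗ S.subtype = (S.map f).subtype ∘ₗ f.submoduleMap S := rfl
  rw [Submodule.baseChange, Submodule.baseChange, ← LinearMap.range_comp,
    ← LinearMap.baseChange_comp, hf, LinearMap.baseChange_comp]
  exact LinearMap.range_comp_le_range _ _

namespace PreMHS

section Filtrations

variable {K : Type} [Field K] [Algebra K ℂ] {V : Type} [AddCommGroup V] [Module K V]
  (H : PreMHS K V)

theorem F_antitone : Antitone H.F := antitone_int_of_succ_le H.Fanti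

theorem W_monotone : Monotone H.W := monotone_int_of_le_succ H.Wmono

theorem WC_monotone : Monotone H.WC := fun _ _ h => Submodule.baseChange_mono ℂ (H.W_monotone h)

theorem exists_WC_eq_bot : ∃ m₀, ∀ m ≤ m₀, H.WC m = ⊥ := by
  obtain ⟨m₀, hm₀⟩ := H.Wbdd
  refine ⟨m₀, fun m hm => ?_⟩
  rw [WC, le_bot_iff.1 (hm₀ ▸ H.W_monotone hm : H.W m ≤ ⊥), Submodule.baseChange_bot]

theorem exists_mem_WC (x : ℂ ⊗[K] V) : ∃ m, x ∈ H.WC m := by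
  induction x using TensorProduct.induction_on with
  | zero => exact ⟨0, zero_mem _⟩
  | tmul c v =>
    obtain ⟨m, hm⟩ := H.Wexh v
    exact ⟨m, Submodule.tmul_mem_baseChange_of_mem c hm⟩
  | add x y hx hy =>
    obtain ⟨a, ha⟩ := hx
    obtain ⟨b, hb⟩ := hy
    exact ⟨max a b, add_mem (H.WC_monotone (le_max_left a b) ha)
      (H.WC_monotone (le_max_right a b) hb)⟩

theorem WC_pred_le_WC (m : ℤ) : H.WC (m - 1) ≤ H.WC m := H.WC_monotone (by omega)

/-- The preimage in `W_m` of the image of `S` in `Gr^W_m`. -/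
noncomputable def preGr (m : ℤ) (S : Submodule ℂ (ℂ ⊗[K] V)) : Submodule ℂ (ℂ ⊗[K] V) :=
  S ⊓ H.WC m ⊔ H.WC (m - 1)

theorem preGr_mono (m : ℤ) {S T : Submodule ℂ (ℂ ⊗[K] V)} (h : S ≤ T) :
    H.preGr m S ≤ H.preGr m T :=
  sup_le_sup_right (inf_le_inf_right _ h) _

theorem inf_WC_le_preGr (m : ℤ) (S : Submodule ℂ (ℂ ⊗[K] V)) : S ⊓ H.WC m ≤ H.preGr m S :=
  le_sup_left

theorem WC_pred_le_preGr (m : ℤ) (S : Submodule ℂ (ℂ ⊗[K] V)) : H.WC (m - 1) ≤ H.preGr m S :=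
  le_sup_right

theorem preGr_eq (m : ℤ) (S : Submodule ℂ (ℂ ⊗[K] V)) :
    H.preGr m S = (S ⊔ H.WC (m - 1)) ⊓ H.WC m := by
  rw [preGr, sup_comm, sup_comm S, sup_inf_assoc_of_le _ (H.WC_pred_le_WC m)]

end Filtrations

end PreMHS

section Conjugation

variable {K : Type} [Field K] [Algebra K ℝ] [Algebra K ℂ] [IsScalarTower K ℝ ℂ]
  {V : Type} [AddCommGroup V] [Module K V]

theorem conjT_tmul (c : ℂ) (v : V) : conjT K (c ⊗ₜ[K] v) = star c ⊗ₜ[K] v := rfl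

theorem conjT_conjT (x : ℂ ⊗[K] V) : conjT K (conjT K x) = x := by
  induction x using TensorProduct.induction_on with
  | zero => simp only [map_zero]
  | tmul c v => rw [conjT_tmul, conjT_tmul, star_star]
  | add x y hx hy => rw [map_add, map_add, hx, hy]

theorem mem_conjSub {S : Submodule ℂ (ℂ ⊗[K] V)} {x : ℂ ⊗[K] V} :
    x ∈ conjSub K S ↔ conjT K x ∈ S :=
  ⟨by rintro ⟨y, hy, rfl⟩; rwa [conjT_conjT], fun h => ⟨conjT K x, h, conjT_conjT x⟩⟩

theorem conjSub_mono {S T : Submodule ℂ (ℂ ⊗[K] V)} (h : S ≤ T) : conjSub K S ≤ conjSub K T :=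
  fun _ hx => mem_conjSub.2 (h (mem_conjSub.1 hx))

variable {V' : Type} [AddCommGroup V'] [Module K V']

theorem baseChange_conjT (f : V →ₗ[K] V') (x : ℂ ⊗[K] V) :
    f.baseChange ℂ (conjT K x) = conjT K (f.baseChange ℂ x) := by
  induction x using TensorProduct.induction_on with
  | zero => simp only [map_zero]
  | tmul c v => rfl
  | add x y hx hy => rw [map_add, map_add, hx, hy, map_add, map_add]

theorem map_conjSub_le (f : V →ₗ[K] V') (S : Submodule ℂ (ℂ ⊗[K] V)) :
    (conjSub K S).map (f.baseChange ℂ) ≤ conjSub K (S.map (f.baseChange ℂ)) := by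
  rintro _ ⟨_, ⟨y, hy, rfl⟩, rfl⟩
  exact ⟨f.baseChange ℂ y, Submodule.mem_map_of_mem hy, (baseChange_conjT f y).symm⟩

end Conjugation

namespace PreMHS

variable {K : Type} [Field K] [Algebra K ℝ] [Algebra K ℂ] [IsScalarTower K ℝ ℂ]
  {V : Type} [AddCommGroup V] [Module K V] (H : PreMHS K V)

noncomputable def conjF (q : ℤ) : Submodule ℂ (ℂ ⊗[K] V) := conjSub K (H.F q)

theorem conjF_antitone : Antitone H.conjF := fun _ _ h => conjSub_mono (H.F_antitone h)

noncomputable def deligneConj (p q : ℤ) : Submodule ℂ (ℂ ⊗[K] V) :=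
  (H.conjF q ⊓ H.WC (p + q)) ⊔ ⨆ j : {j : ℤ // 2 ≤ j}, (H.conjF (q - j.1 + 1) ⊓ H.WC (p + q - j.1))

theorem deligneI_eq (p q : ℤ) :
    deligneI K H p q = H.F p ⊓ H.WC (p + q) ⊓ H.deligneConj p q := rfl

theorem deligneI_le_F (p q : ℤ) : deligneI K H p q ≤ H.F p := inf_le_left.trans inf_le_left

theorem deligneI_le_WC (p q : ℤ) : deligneI K H p q ≤ H.WC (p + q) := inf_le_left.trans inf_le_right

theorem conjF_inf_WC_le_deligneConj {p q ℓ : ℤ} (hℓ : ℓ < p + q) :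
    H.conjF (ℓ + 1 - p) ⊓ H.WC ℓ ≤ H.deligneConj p q := by
  rcases (show ℓ = p + q - 1 ∨ ℓ ≤ p + q - 2 by omega) with rfl | hℓ
  · exact le_sup_of_le_left (inf_le_inf (le_of_eq (by ring_nf)) (H.WC_pred_le_WC _))
  · refine le_sup_of_le_right (le_iSup_of_le ⟨p + q - ℓ, by omega⟩ (le_of_eq ?_))
    congr 2 <;> ring

theorem deligneConj_le {p q ℓ : ℤ} (hℓ : ℓ < p + q) :
    H.deligneConj p q ≤ H.conjF (ℓ + 1 - p) ⊔ H.WC (ℓ - 1) := by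
  refine sup_le (inf_le_left.trans (le_sup_of_le_left (H.conjF_antitone (by omega))))
    (iSup_le fun j => ?_)
  rcases le_or_gt ℓ (p + q - j.1) with h | h
  · exact inf_le_left.trans (le_sup_of_le_left (H.conjF_antitone (by omega)))
  · exact inf_le_right.trans (le_sup_of_le_right (H.WC_monotone (by omega)))

theorem deligneI_le_preGr_F (p q : ℤ) : deligneI K H p q ≤ H.preGr (p + q) (H.F p) :=
  inf_le_left.trans (H.inf_WC_le_preGr _ _)

theorem deligneI_le_preGr_conjF (p q : ℤ) : deligneI K H p q ≤ H.preGr (p + q) (H.conjF q) := by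
  have h := H.deligneConj_le (p := p) (q := q) (ℓ := p + q - 1) (by omega)
  rw [show p + q - 1 + 1 - p = q by ring] at h
  rw [preGr_eq, deligneI_eq]
  exact le_inf (inf_le_right.trans (h.trans (sup_le_sup_left (H.WC_monotone (by omega)) _)))
    (inf_le_left.trans inf_le_right)

end PreMHS

namespace PreMHS.IsMHS

variable {K : Type} [Field K] [Algebra K ℝ] [Algebra K ℂ] [IsScalarTower K ℝ ℂ]
  {V : Type} [AddCommGroup V] [Module K V] {H : PreMHS K V}

theorem preGr_sup (hH : H.IsMHS) {m p q : ℤ} (h : p + q = m + 1) :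
    H.preGr m (H.F p) ⊔ H.preGr m (H.conjF q) = H.WC m := by
  obtain rfl : q = m - p + 1 := by omega
  exact (Submodule.sup_eq_and_inf_eq_of_isCompl_map_mkQ (H.WC_pred_le_WC m) (hH m p)).1

theorem preGr_inf (hH : H.IsMHS) {m p q : ℤ} (h : p + q = m + 1) :
    H.preGr m (H.F p) ⊓ H.preGr m (H.conjF q) = H.WC (m - 1) := by
  obtain rfl : q = m - p + 1 := by omega
  exact (Submodule.sup_eq_and_inf_eq_of_isCompl_map_mkQ (H.WC_pred_le_WC m) (hH m p)).2

theorem deligneI_inf_WC_pred_eq_bot (hH : H.IsMHS) (p q : ℤ) :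
    deligneI K H p q ⊓ H.WC (p + q - 1) = ⊥ := by
  set X := deligneI K H p q ⊓ H.WC (p + q - 1)
  have hX : ∀ ℓ, X ≤ H.WC ℓ := by
    refine Int.induction_of_forall_ge (p + q - 1)
      (fun ℓ hℓ => inf_le_right.trans (H.WC_monotone hℓ)) fun ℓ hX => ?_
    rcases le_or_gt (p + q - 1) ℓ with hℓ | hℓ
    · exact inf_le_right.trans (H.WC_monotone hℓ)
    -- the image of `X` in `Gr^W_{ℓ+1}` lies in `F^p ∩ conj F^{ℓ+2-p} = 0`
    have hF : X ≤ H.preGr (ℓ + 1) (H.F p) :=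
      (le_inf (inf_le_left.trans (H.deligneI_le_F p q)) hX).trans (H.inf_WC_le_preGr _ _)
    have hC : X ≤ H.preGr (ℓ + 1) (H.conjF (ℓ + 1 + 1 - p)) := by
      rw [preGr_eq]
      exact le_inf (inf_le_left.trans (inf_le_right.trans (H.deligneConj_le (by omega)))) hX
    simpa using (le_inf hF hC).trans (hH.preGr_inf (by omega)).le
  obtain ⟨m₀, hm₀⟩ := H.exists_WC_eq_bot
  exact le_bot_iff.1 ((hX m₀).trans (hm₀ m₀ le_rfl).le)

theorem F_inf_WC_inf_deligneConj_sup_le (hH : H.IsMHS) (p q : ℤ) {ℓ : ℤ} (hℓ : ℓ < p + q) :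
    H.F p ⊓ H.WC (p + q) ⊓ (H.deligneConj p q ⊔ H.WC ℓ) ≤
      H.F p ⊓ H.WC (p + q - 1) ⊔ deligneI K H p q := by
  set A := H.F p ⊓ H.WC (p + q - 1)
  obtain ⟨m₀, hm₀⟩ := H.exists_WC_eq_bot
  refine Int.induction_of_forall_le (P := fun ℓ => ℓ < p + q →
      H.F p ⊓ H.WC (p + q) ⊓ (H.deligneConj p q ⊔ H.WC ℓ) ≤ A ⊔ deligneI K H p q) m₀
    (fun ℓ hℓ _ => by rw [hm₀ ℓ hℓ, sup_bot_eq]; exact le_sup_right) (fun ℓ ih hℓ => ?_) ℓ hℓ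
  -- split `Gr^W_{ℓ+1} = F^p ⊕ conj F^{ℓ+2-p}`; the conjugate part is a term of Deligne's formula
  have hsplit : H.WC (ℓ + 1) ≤ A ⊔ (H.deligneConj p q ⊔ H.WC ℓ) := by
    rw [← hH.preGr_sup (m := ℓ + 1) (p := p) (q := ℓ + 1 + 1 - p) (by omega)]
    simp only [preGr, add_sub_cancel_right]
    refine sup_le (sup_le ?_ (le_sup_of_le_right le_sup_right))
      (sup_le ?_ (le_sup_of_le_right le_sup_right))
    · exact le_sup_of_le_left (inf_le_inf_left _ (H.WC_monotone (by omega)))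
    · exact le_sup_of_le_right (le_sup_of_le_left (H.conjF_inf_WC_le_deligneConj (by omega)))
  have hA : A ≤ H.F p ⊓ H.WC (p + q) := inf_le_inf_left _ (H.WC_pred_le_WC _)
  calc H.F p ⊓ H.WC (p + q) ⊓ (H.deligneConj p q ⊔ H.WC (ℓ + 1))
      ≤ H.F p ⊓ H.WC (p + q) ⊓ (A ⊔ (H.deligneConj p q ⊔ H.WC ℓ)) :=
        inf_le_inf_left _ (sup_le (le_sup_of_le_right le_sup_left) hsplit)
    _ = A ⊔ H.F p ⊓ H.WC (p + q) ⊓ (H.deligneConj p q ⊔ H.WC ℓ) := by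
        rw [inf_comm (H.F p ⊓ H.WC (p + q)), sup_inf_assoc_of_le _ hA, inf_comm]
    _ ≤ A ⊔ deligneI K H p q := sup_le le_sup_left (ih (by omega))

theorem preGr_inf_preGr_le (hH : H.IsMHS) (p q : ℤ) :
    H.preGr (p + q) (H.F p) ⊓ H.preGr (p + q) (H.conjF q) ≤
      deligneI K H p q ⊔ H.WC (p + q - 1) := by
  have hC : H.preGr (p + q) (H.conjF q) ≤ H.deligneConj p q ⊔ H.WC (p + q - 1) :=
    sup_le_sup_right le_sup_left _
  calc H.preGr (p + q) (H.F p) ⊓ H.preGr (p + q) (H.conjF q)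
      = (H.F p ⊓ H.WC (p + q) ⊔ H.WC (p + q - 1)) ⊓ H.preGr (p + q) (H.conjF q) := rfl
    _ = H.F p ⊓ H.WC (p + q) ⊓ H.preGr (p + q) (H.conjF q) ⊔ H.WC (p + q - 1) := by
        rw [sup_comm, sup_inf_assoc_of_le _ (H.WC_pred_le_preGr _ _), sup_comm]
    _ ≤ H.F p ⊓ H.WC (p + q) ⊓ (H.deligneConj p q ⊔ H.WC (p + q - 1)) ⊔ H.WC (p + q - 1) := by
        gcongr
    _ ≤ deligneI K H p q ⊔ H.WC (p + q - 1) := by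
        refine sup_le ((hH.F_inf_WC_inf_deligneConj_sup_le p q (by omega)).trans
          (sup_le (le_sup_of_le_right inf_le_right) le_sup_left)) le_sup_right

theorem F_inf_WC_le_iSup_deligneI_sup_WC (hH : H.IsMHS) (k m : ℤ) :
    H.F k ⊓ H.WC m ≤ (⨆ p : {p : ℤ // k ≤ p}, deligneI K H p (m - p)) ⊔ H.WC (m - 1) := by
  obtain ⟨k₁, hk₁⟩ := H.Fbdd
  refine Int.induction_of_forall_ge (P := fun k => H.F k ⊓ H.WC m ≤
      (⨆ p : {p : ℤ // k ≤ p}, deligneI K H p (m - p)) ⊔ H.WC (m - 1)) k₁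
    (fun k hk => ?_) (fun k ih => ?_) k
  · simp [le_bot_iff.1 (hk₁ ▸ H.F_antitone hk : H.F k ≤ ⊥)]
  have hpiece := hH.preGr_inf_preGr_le k (m - k)
  rw [add_sub_cancel] at hpiece
  calc H.F k ⊓ H.WC m
      ≤ H.preGr m (H.F k) ⊓ (H.preGr m (H.F (k + 1)) ⊔ H.preGr m (H.conjF (m - k))) := by
        rw [hH.preGr_sup (by omega)]
        exact le_inf (H.inf_WC_le_preGr _ _) inf_le_right
    _ = H.preGr m (H.F (k + 1)) ⊔ H.preGr m (H.F k) ⊓ H.preGr m (H.conjF (m - k)) := by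
        rw [inf_comm, sup_inf_assoc_of_le _ (H.preGr_mono _ (H.F_antitone (by omega))), inf_comm]
    _ ≤ (⨆ p : {p : ℤ // k ≤ p}, deligneI K H p (m - p)) ⊔ H.WC (m - 1) := by
        have hmono : (⨆ p : {p : ℤ // k + 1 ≤ p}, deligneI K H p (m - p)) ≤
            ⨆ p : {p : ℤ // k ≤ p}, deligneI K H p (m - p) :=
          iSup_mono' fun p => ⟨⟨p.1, by omega⟩, le_rfl⟩
        refine sup_le (sup_le (ih.trans (sup_le_sup_right hmono _)) le_sup_right)
          (hpiece.trans (sup_le_sup_right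
            (le_iSup (fun p : {p : ℤ // k ≤ p} => deligneI K H p (m - p)) ⟨k, le_rfl⟩) _))

theorem F_inf_WC_le_iSup_deligneI (hH : H.IsMHS) (k m : ℤ) :
    H.F k ⊓ H.WC m ≤
      ⨆ pq : {pq : ℤ × ℤ // k ≤ pq.1 ∧ pq.1 + pq.2 ≤ m}, deligneI K H pq.1.1 pq.1.2 := by
  obtain ⟨m₀, hm₀⟩ := H.exists_WC_eq_bot
  refine Int.induction_of_forall_le (P := fun m => H.F k ⊓ H.WC m ≤
      ⨆ pq : {pq : ℤ × ℤ // k ≤ pq.1 ∧ pq.1 + pq.2 ≤ m}, deligneI K H pq.1.1 pq.1.2) m₀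
    (fun m hm => by simp [hm₀ m hm]) (fun m ih => ?_) m
  set S := ⨆ p : {p : ℤ // k ≤ p}, deligneI K H p (m + 1 - p)
  have hS : S ≤ H.F k ⊓ H.WC (m + 1) := iSup_le fun p =>
    le_inf ((H.deligneI_le_F _ _).trans (H.F_antitone p.2))
      ((H.deligneI_le_WC _ _).trans (H.WC_monotone (by omega)))
  calc H.F k ⊓ H.WC (m + 1)
      ≤ (S ⊔ H.WC m) ⊓ (H.F k ⊓ H.WC (m + 1)) :=
        le_inf (by simpa using hH.F_inf_WC_le_iSup_deligneI_sup_WC k (m + 1)) le_rfl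
    _ = S ⊔ H.WC m ⊓ (H.F k ⊓ H.WC (m + 1)) := sup_inf_assoc_of_le _ hS
    _ ≤ _ := by
        refine sup_le (iSup_le fun p => le_iSup_of_le ⟨(p.1, m + 1 - p.1), p.2, by omega⟩ le_rfl)
          ((le_inf (inf_le_right.trans inf_le_left) inf_le_left).trans (ih.trans ?_))
        exact iSup_mono' fun pq => ⟨⟨pq.1, pq.2.1, by omega⟩, le_rfl⟩

theorem disjoint_deligneI (hH : H.IsMHS) (i : ℤ × ℤ) :
    Disjoint (deligneI K H i.1 i.2) (H.WC (i.1 + i.2 - 1) ⊔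
      ⨆ (j : ℤ × ℤ) (_ : j.1 + j.2 = i.1 + i.2) (_ : j ≠ i), deligneI K H j.1 j.2) := by
  obtain ⟨p, q⟩ := i
  dsimp only
  have hothers : H.WC (p + q - 1) ⊔
      ⨆ (j : ℤ × ℤ) (_ : j.1 + j.2 = p + q) (_ : j ≠ (p, q)), deligneI K H j.1 j.2 ≤
      H.preGr (p + q) (H.F (p + 1)) ⊔ H.preGr (p + q) (H.conjF (q + 1)) := by
    refine sup_le (le_sup_of_le_left (H.WC_pred_le_preGr _ _))
      (iSup₂_le fun j hj => iSup_le fun hne => ?_)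
    have hjp : j.1 ≠ p := fun h => hne (Prod.ext h (by simp only; omega))
    rcases hjp.lt_or_gt with hlt | hgt
    · refine le_sup_of_le_right ((H.deligneI_le_preGr_conjF _ _).trans ?_)
      rw [hj]
      exact H.preGr_mono _ (H.conjF_antitone (by omega))
    · refine le_sup_of_le_left ((H.deligneI_le_preGr_F _ _).trans ?_)
      rw [hj]
      exact H.preGr_mono _ (H.F_antitone (by omega))
  have hHodge : H.preGr (p + q) (H.F p) ⊓ H.preGr (p + q) (H.conjF q) ⊓
      (H.preGr (p + q) (H.F (p + 1)) ⊔ H.preGr (p + q) (H.conjF (q + 1))) ≤ H.WC (p + q - 1) :=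
    inf_inf_sup_le_of_inf_le (H.preGr_mono _ (H.F_antitone (by omega))) (H.WC_pred_le_preGr _ _)
      (hH.preGr_inf (by omega)).le (hH.preGr_inf (by omega)).le
  rw [disjoint_iff, ← le_bot_iff, ← hH.deligneI_inf_WC_pred_eq_bot p q]
  exact le_inf inf_le_left ((inf_le_inf (le_inf (H.deligneI_le_preGr_F p q)
    (H.deligneI_le_preGr_conjF p q)) hothers).trans hHodge)

theorem iSupIndep_deligneI (hH : H.IsMHS) :
    iSupIndep fun pq : ℤ × ℤ => deligneI K H pq.1 pq.2 :=
  iSupIndep_of_disjoint_sup_lower H.WC_monotone (fun pq => pq.1 + pq.2)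
    (fun _ => H.deligneI_le_WC _ _) hH.disjoint_deligneI

end PreMHS.IsMHS

namespace IsMHSHom

section

variable {K : Type} [Field K] [Algebra K ℂ] {V V' : Type} [AddCommGroup V] [Module K V]
  [AddCommGroup V'] [Module K V'] {H : PreMHS K V} {H' : PreMHS K V'} {f : V →ₗ[K] V'}

theorem map_WC_le (hf : IsMHSHom K H H' f) (m : ℤ) : (H.WC m).map (f.baseChange ℂ) ≤ H'.WC m :=
  (Submodule.map_baseChange_le f _).trans (Submodule.baseChange_mono ℂ (hf.mapW m))

end

variable {K : Type} [Field K] [Algebra K ℝ] [Algebra K ℂ] [IsScalarTower K ℝ ℂ]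
  {V V' : Type} [AddCommGroup V] [Module K V] [AddCommGroup V'] [Module K V']
  {H : PreMHS K V} {H' : PreMHS K V'} {f : V →ₗ[K] V'}

theorem map_conjF_le (hf : IsMHSHom K H H' f) (q : ℤ) :
    (H.conjF q).map (f.baseChange ℂ) ≤ H'.conjF q :=
  (map_conjSub_le f _).trans (conjSub_mono (hf.mapF q))

theorem map_deligneI_le (hf : IsMHSHom K H H' f) (p q : ℤ) :
    (deligneI K H p q).map (f.baseChange ℂ) ≤ deligneI K H' p q := by
  have hinf (S T : Submodule ℂ (ℂ ⊗[K] V)) :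
      (S ⊓ T).map (f.baseChange ℂ) ≤ S.map (f.baseChange ℂ) ⊓ T.map (f.baseChange ℂ) :=
    Submodule.map_inf_le _
  rw [PreMHS.deligneI_eq, PreMHS.deligneI_eq, PreMHS.deligneConj, PreMHS.deligneConj]
  refine (hinf _ _).trans (inf_le_inf ((hinf _ _).trans (inf_le_inf (hf.mapF p)
    (hf.map_WC_le _))) ?_)
  rw [Submodule.map_sup, Submodule.map_iSup]
  exact sup_le_sup ((hinf _ _).trans (inf_le_inf (hf.map_conjF_le q) (hf.map_WC_le _)))
    (iSup_mono fun j => (hinf _ _).trans (inf_le_inf (hf.map_conjF_le _) (hf.map_WC_le _)))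

end IsMHSHom

theorem deligne_splitting {V : Type} [AddCommGroup V] [Module K V]
    (H : PreMHS K V) (hH : H.IsMHS) :
    (iSupIndep (fun pq : ℤ × ℤ => deligneI K H pq.1 pq.2)) ∧
    (⨆ pq : ℤ × ℤ, deligneI K H pq.1 pq.2) = ⊤ ∧
    (∀ m, H.WC m = ⨆ pq : {pq : ℤ × ℤ // pq.1 + pq.2 ≤ m}, deligneI K H pq.1.1 pq.1.2) ∧
    (∀ p₀, H.F p₀ = ⨆ pq : {pq : ℤ × ℤ // p₀ ≤ pq.1}, deligneI K H pq.1.1 pq.1.2) ∧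
    (∀ (V' : Type) (_ : AddCommGroup V') (_ : Module K V') (_ : FiniteDimensional K V')
      (H' : PreMHS K V') (_ : H'.IsMHS) (f : V →ₗ[K] V') (_ : IsMHSHom K H H' f)
      (p q : ℤ), (deligneI K H p q).map (f.baseChange ℂ) ≤ deligneI K H' p q) := by
  obtain ⟨k₀, hk₀⟩ := H.Fexh
  have hW (m : ℤ) : H.WC m ≤ ⨆ pq : {pq : ℤ × ℤ // pq.1 + pq.2 ≤ m}, deligneI K H pq.1.1 pq.1.2 :=
    calc H.WC m = H.F k₀ ⊓ H.WC m := by rw [hk₀, top_inf_eq]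
      _ ≤ _ := hH.F_inf_WC_le_iSup_deligneI k₀ m
      _ ≤ _ := iSup_mono' fun pq => ⟨⟨pq.1, pq.2.2⟩, le_rfl⟩
  refine ⟨hH.iSupIndep_deligneI, eq_top_iff.2 fun x _ => ?_, fun m => ?_, fun p₀ => ?_,
    fun _ _ _ _ _ _ _ hf p q => hf.map_deligneI_le p q⟩
  · obtain ⟨m, hm⟩ := H.exists_mem_WC x
    exact ((hW m).trans (iSup_mono' fun pq => ⟨pq.1, le_rfl⟩) : H.WC m ≤ _) hm
  · exact le_antisymm (hW m) (iSup_le fun pq => (H.deligneI_le_WC _ _).trans (H.WC_monotone pq.2))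
  · refine le_antisymm (fun x hx => ?_)
      (iSup_le fun pq => (H.deligneI_le_F _ _).trans (H.F_antitone pq.2))
    obtain ⟨m, hm⟩ := H.exists_mem_WC x
    exact ((hH.F_inf_WC_le_iSup_deligneI p₀ m).trans
      (iSup_mono' fun pq => ⟨⟨pq.1, pq.2.1⟩, le_rfl⟩) : H.F p₀ ⊓ H.WC m ≤ _) ⟨hx, hm⟩
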